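/- With the notation above and denoting by λ₂ the second eigenvalue of −(1/2)d²/dz² + W on the torus, one has the refined lower bound m(ĝ) ≥ λ₁ + ĝ‖φ₁‖₄⁴ − 2^{5/2} ĝ^{3/2} ‖φ₁‖₆³ ‖φ₁‖₄² (λ₂ − λ₁)^{−1/2}, for every ĝ ≥ 0. -/

import Mathlib

open MeasureTheory intervalIntegral

noncomputable def linEnergy (W : ℝ → ℝ) (T : ℝ) (ψ : ℝ → ℂ) : ℝ :=
  (1 / 2) * (∫ z in (-(T / 2))..(T / 2), ‖deriv ψ z‖ ^ 2) +
    ∫ z in (-(T / 2))..(T / 2), W z * ‖ψ z‖ ^ 2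

noncomputable def gpEnergy (W : ℝ → ℝ) (T : ℝ) (g : ℝ) (ψ : ℝ → ℂ) : ℝ :=
  linEnergy W T ψ + g * ∫ z in (-(T / 2))..(T / 2), ‖ψ z‖ ^ 4

def admissible (T : ℝ) : Set (ℝ → ℂ) :=
  {ψ | ContDiff ℝ 1 ψ ∧ Function.Periodic ψ T ∧
    (∫ z in (-(T / 2))..(T / 2), ‖ψ z‖ ^ 2) = 1}

/-- `L^p` norm of a real function over one period. -/
noncomputable def pNorm (T : ℝ) (p : ℝ) (f : ℝ → ℝ) : ℝ :=
  (∫ z in (-(T / 2))..(T / 2), |f z| ^ p) ^ (1 / p)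

/- ### Auxiliary lemmas -/

lemma quad_lin_zero {A B : ℝ} (h : ∀ t : ℝ, 0 ≤ A * t ^ 2 + B * t) : B = 0 := by
  have h1 := h 1
  have h2 := h (-1)
  have hA : 0 ≤ A := by linarith
  by_contra hB
  have hpos : (0:ℝ) < 2 * A + 1 := by linarith
  have h3 := h (-B / (2 * A + 1))
  have e : A * (-B / (2 * A + 1)) ^ 2 + B * (-B / (2 * A + 1))
      = -(B ^ 2 * (A + 1)) / (2 * A + 1) ^ 2 := by
    field_simp
    ring
  rw [e] at h3
  have hB2 : 0 < B ^ 2 * (A + 1) := by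
    have : 0 < B ^ 2 := by positivity
    nlinarith
  have : -(B ^ 2 * (A + 1)) / (2 * A + 1) ^ 2 < 0 :=
    div_neg_of_neg_of_pos (by linarith) (by positivity)
  linarith

lemma integral_cs {a b : ℝ} (hab : a ≤ b) {f g : ℝ → ℝ}
    (hf : IntervalIntegrable (fun z => f z ^ 2) volume a b)
    (hg : IntervalIntegrable (fun z => g z ^ 2) volume a b)
    (hfg : IntervalIntegrable (fun z => f z * g z) volume a b) :
    ∫ z in a..b, f z * g z ≤
      Real.sqrt (∫ z in a..b, f z ^ 2) * Real.sqrt (∫ z in a..b, g z ^ 2) := by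
  set F := ∫ z in a..b, f z ^ 2 with hF
  set G := ∫ z in a..b, g z ^ 2 with hG
  have hF0 : 0 ≤ F := integral_nonneg hab (fun z _ => sq_nonneg _)
  have hG0 : 0 ≤ G := integral_nonneg hab (fun z _ => sq_nonneg _)
  have key : ∀ t : ℝ, 0 < t → (∫ z in a..b, f z * g z) ≤ t / 2 * F + 1 / (2 * t) * G := by
    intro t ht
    have hmono : (∫ z in a..b, f z * g z) ≤ ∫ z in a..b, (t / 2 * f z ^ 2 + 1 / (2 * t) * g z ^ 2) := by
      apply integral_mono_on hab hfg ((hf.const_mul _).add (hg.const_mul _))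
      intro z _
      rw [← sub_nonneg]
      have e : t / 2 * f z ^ 2 + 1 / (2 * t) * g z ^ 2 - f z * g z
          = (t * f z - g z) ^ 2 / (2 * t) := by
        field_simp
        ring
      rw [e]
      positivity
    rwa [integral_add (hf.const_mul _) (hg.const_mul _), intervalIntegral.integral_const_mul, intervalIntegral.integral_const_mul] at hmono
  apply le_of_forall_pos_le_add
  intro ε hε
  rcases eq_or_lt_of_le hF0 with hF0' | hFpos
  · rcases eq_or_lt_of_le hG0 with hG0' | hGpos
    · have := key 1 one_pos
      rw [← hF0', ← hG0'] at this
      simp at this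
      calc (∫ z in a..b, f z * g z) ≤ 0 := by linarith
        _ ≤ Real.sqrt F * Real.sqrt G + ε := by positivity
    · have := key (G / (2 * ε)) (by positivity)
      rw [← hF0'] at this
      have hcalc : G / (2 * ε) / 2 * 0 + 1 / (2 * (G / (2 * ε))) * G = ε := by
        field_simp
        ring
      rw [hcalc] at this
      calc (∫ z in a..b, f z * g z) ≤ ε := this
        _ ≤ Real.sqrt F * Real.sqrt G + ε := by
            have : 0 ≤ Real.sqrt F * Real.sqrt G := by positivity
            linarith
  · rcases eq_or_lt_of_le hG0 with hG0' | hGpos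
    · have := key (2 * ε / F) (by positivity)
      rw [← hG0'] at this
      have hcalc : 2 * ε / F / 2 * F + 1 / (2 * (2 * ε / F)) * 0 = ε := by
        field_simp
        ring
      rw [hcalc] at this
      calc (∫ z in a..b, f z * g z) ≤ ε := this
        _ ≤ Real.sqrt F * Real.sqrt G + ε := by
            have : 0 ≤ Real.sqrt F * Real.sqrt G := by positivity
            linarith
    · have hsF : 0 < Real.sqrt F := Real.sqrt_pos.2 hFpos
      have hsG : 0 < Real.sqrt G := Real.sqrt_pos.2 hGpos
      have := key (Real.sqrt G / Real.sqrt F) (by positivity)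
      have e1 : Real.sqrt G / Real.sqrt F / 2 * F = Real.sqrt F * Real.sqrt G / 2 := by
        rw [show Real.sqrt G / Real.sqrt F / 2 * F = Real.sqrt G * (F / Real.sqrt F) / 2 by ring,
          Real.div_sqrt]
        ring
      have e2 : 1 / (2 * (Real.sqrt G / Real.sqrt F)) * G = Real.sqrt F * Real.sqrt G / 2 := by
        rw [one_div, mul_inv, inv_div,
          show (2:ℝ)⁻¹ * (Real.sqrt F / Real.sqrt G) * G = Real.sqrt F * (G / Real.sqrt G) / 2
            by ring, Real.div_sqrt]
      rw [e1, e2] at this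
      linarith

noncomputable def QR (W : ℝ → ℝ) (T : ℝ) (f : ℝ → ℝ) : ℝ :=
  (1 / 2) * (∫ z in (-(T / 2))..(T / 2), (deriv f z) ^ 2) +
    ∫ z in (-(T / 2))..(T / 2), W z * (f z) ^ 2

noncomputable def BR (W : ℝ → ℝ) (T : ℝ) (f g : ℝ → ℝ) : ℝ :=
  (1 / 2) * (∫ z in (-(T / 2))..(T / 2), deriv f z * deriv g z) +
    ∫ z in (-(T / 2))..(T / 2), W z * (f z * g z)

lemma iiW {T : ℝ} {W : ℝ → ℝ} (hT : 0 < T)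
    (hW : ContinuousOn W (Set.Icc (-(T / 2)) (T / 2))) {F : ℝ → ℝ} (hF : Continuous F) :
    IntervalIntegrable (fun z => W z * F z) volume (-(T / 2)) (T / 2) := by
  apply ContinuousOn.intervalIntegrable
  rw [Set.uIcc_of_le (by linarith)]
  exact hW.mul hF.continuousOn

lemma QR_nonneg {T : ℝ} {W : ℝ → ℝ} (hT : 0 < T) (hWpos : ∀ z, 0 ≤ W z) (f : ℝ → ℝ) :
    0 ≤ QR W T f := by
  have hab : -(T / 2) ≤ T / 2 := by linarith
  have h1 : 0 ≤ ∫ z in (-(T / 2))..(T / 2), (deriv f z) ^ 2 :=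
    integral_nonneg hab (fun z _ => sq_nonneg _)
  have h2 : 0 ≤ ∫ z in (-(T / 2))..(T / 2), W z * (f z) ^ 2 :=
    integral_nonneg hab (fun z _ => mul_nonneg (hWpos z) (sq_nonneg _))
  unfold QR; linarith

lemma deriv_smul_add_smul {x y : ℝ → ℝ} (hx : ContDiff ℝ 1 x) (hy : ContDiff ℝ 1 y)
    (s t : ℝ) (z : ℝ) :
    deriv (fun z => s * x z + t * y z) z = s * deriv x z + t * deriv y z :=
  ((((hx.differentiable one_ne_zero z).hasDerivAt).const_mul s).add
    (((hy.differentiable one_ne_zero z).hasDerivAt).const_mul t)).deriv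

lemma QR_expand {T : ℝ} {W : ℝ → ℝ} (hT : 0 < T)
    (hW : ContinuousOn W (Set.Icc (-(T / 2)) (T / 2)))
    {x y : ℝ → ℝ} (hx : ContDiff ℝ 1 x) (hy : ContDiff ℝ 1 y) (s t : ℝ) :
    QR W T (fun z => s * x z + t * y z) =
      s ^ 2 * QR W T x + 2 * (s * t) * BR W T x y + t ^ 2 * QR W T y := by
  have hx' := hx.continuous_deriv le_rfl
  have hy' := hy.continuous_deriv le_rfl
  have hxc := hx.continuous
  have hyc := hy.continuous
  unfold QR BR
  have e1 : (∫ z in (-(T / 2))..(T / 2), (deriv (fun z => s * x z + t * y z) z) ^ 2)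
      = (∫ z in (-(T / 2))..(T / 2), (s ^ 2 * (deriv x z) ^ 2 +
          (2 * (s * t) * (deriv x z * deriv y z) + t ^ 2 * (deriv y z) ^ 2))) := by
    apply integral_congr
    intro z _
    simp only [deriv_smul_add_smul hx hy s t]; ring
  have e2 : (∫ z in (-(T / 2))..(T / 2), W z * (s * x z + t * y z) ^ 2)
      = (∫ z in (-(T / 2))..(T / 2), (s ^ 2 * (W z * (x z) ^ 2) +
          (2 * (s * t) * (W z * (x z * y z)) + t ^ 2 * (W z * (y z) ^ 2)))) := by
    apply integral_congr
    intro z _; dsimp only; ring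
  erw [e1, e2,
    intervalIntegral.integral_add ((continuous_const.mul (hx'.pow 2)).intervalIntegrable _ _)
      (((continuous_const.mul (hx'.mul hy')).add
        (continuous_const.mul (hy'.pow 2))).intervalIntegrable _ _),
    intervalIntegral.integral_add ((continuous_const.mul (hx'.mul hy')).intervalIntegrable _ _)
      ((continuous_const.mul (hy'.pow 2)).intervalIntegrable _ _),
    intervalIntegral.integral_add ((iiW hT hW (hxc.pow 2)).const_mul _)
      ((((iiW hT hW (hxc.mul hyc)).const_mul _)).add (((iiW hT hW (hyc.pow 2)).const_mul _))),
    intervalIntegral.integral_add ((iiW hT hW (hxc.mul hyc)).const_mul _)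
      ((iiW hT hW (hyc.pow 2)).const_mul _),
    intervalIntegral.integral_const_mul, intervalIntegral.integral_const_mul,
    intervalIntegral.integral_const_mul, intervalIntegral.integral_const_mul,
    intervalIntegral.integral_const_mul, intervalIntegral.integral_const_mul]
  simp only [Pi.mul_apply, Pi.pow_apply]
  ring

lemma QR_smul {T : ℝ} {W : ℝ → ℝ} {x : ℝ → ℝ} (hx : ContDiff ℝ 1 x) (c : ℝ) :
    QR W T (fun z => c * x z) = c ^ 2 * QR W T x := by
  have hd : ∀ z, deriv (fun z => c * x z) z = c * deriv x z := fun z =>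
    (((hx.differentiable one_ne_zero z).hasDerivAt).const_mul c).deriv
  unfold QR
  have e1 : (∫ z in (-(T / 2))..(T / 2), (deriv (fun z => c * x z) z) ^ 2)
      = (∫ z in (-(T / 2))..(T / 2), c ^ 2 * (deriv x z) ^ 2) := by
    apply integral_congr; intro z _; simp only [hd]; ring
  have e2 : (∫ z in (-(T / 2))..(T / 2), W z * (c * x z) ^ 2)
      = (∫ z in (-(T / 2))..(T / 2), c ^ 2 * (W z * (x z) ^ 2)) := by
    apply integral_congr; intro z _; dsimp only; ring
  rw [e1, e2, intervalIntegral.integral_const_mul, intervalIntegral.integral_const_mul]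
  ring

lemma sq_int_expand {a b : ℝ} {x y : ℝ → ℝ} (hx : Continuous x) (hy : Continuous y) (s t : ℝ) :
    (∫ z in a..b, (s * x z + t * y z) ^ 2) = s ^ 2 * (∫ z in a..b, (x z) ^ 2) +
      2 * (s * t) * (∫ z in a..b, x z * y z) + t ^ 2 * ∫ z in a..b, (y z) ^ 2 := by
  have e : (∫ z in a..b, (s * x z + t * y z) ^ 2)
      = (∫ z in a..b, (s ^ 2 * (x z) ^ 2 + (2 * (s * t) * (x z * y z) + t ^ 2 * (y z) ^ 2))) := by
    apply integral_congr; intro z _; ring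
  erw [e, intervalIntegral.integral_add ((continuous_const.mul (hx.pow 2)).intervalIntegrable _ _)
      (((continuous_const.mul (hx.mul hy)).add
        (continuous_const.mul (hy.pow 2))).intervalIntegrable _ _),
    intervalIntegral.integral_add ((continuous_const.mul (hx.mul hy)).intervalIntegrable _ _)
      ((continuous_const.mul (hy.pow 2)).intervalIntegrable _ _),
    intervalIntegral.integral_const_mul, intervalIntegral.integral_const_mul,
    intervalIntegral.integral_const_mul]
  simp only [Pi.mul_apply, Pi.pow_apply]
  ring

lemma deriv_ofReal {x : ℝ → ℝ} (hx : ContDiff ℝ 1 x) (z : ℝ) :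
    deriv (fun z => ((x z : ℝ) : ℂ)) z = (((deriv x z : ℝ)) : ℂ) :=
  (Complex.ofRealCLM.hasFDerivAt.comp_hasDerivAt z (hx.differentiable one_ne_zero z).hasDerivAt).deriv

lemma deriv_re {ψ : ℝ → ℂ} (hψ : ContDiff ℝ 1 ψ) (z : ℝ) :
    deriv (fun z => (ψ z).re) z = (deriv ψ z).re :=
  (Complex.reCLM.hasFDerivAt.comp_hasDerivAt z (hψ.differentiable one_ne_zero z).hasDerivAt).deriv

lemma deriv_im {ψ : ℝ → ℂ} (hψ : ContDiff ℝ 1 ψ) (z : ℝ) :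
    deriv (fun z => (ψ z).im) z = (deriv ψ z).im :=
  (Complex.imCLM.hasFDerivAt.comp_hasDerivAt z (hψ.differentiable one_ne_zero z).hasDerivAt).deriv

lemma norm_sq_eq (w : ℂ) : ‖w‖ ^ 2 = w.re ^ 2 + w.im ^ 2 := by
  rw [← Complex.normSq_eq_norm_sq, Complex.normSq_apply]; ring

lemma linEnergy_ofReal {T : ℝ} {W : ℝ → ℝ} {x : ℝ → ℝ} (hx : ContDiff ℝ 1 x) :
    linEnergy W T (fun z => (x z : ℂ)) = QR W T x := by
  unfold linEnergy QR
  have e1 : (∫ z in (-(T / 2))..(T / 2), ‖deriv (fun z => ((x z : ℝ) : ℂ)) z‖ ^ 2)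
      = ∫ z in (-(T / 2))..(T / 2), (deriv x z) ^ 2 := by
    apply integral_congr
    intro z _
    simp only [deriv_ofReal hx, Complex.norm_real, Real.norm_eq_abs, sq_abs]
  have e2 : (∫ z in (-(T / 2))..(T / 2), W z * ‖((x z : ℝ) : ℂ)‖ ^ 2)
      = ∫ z in (-(T / 2))..(T / 2), W z * (x z) ^ 2 := by
    apply integral_congr
    intro z _
    simp only [Complex.norm_real, Real.norm_eq_abs, sq_abs]
  rw [e1, e2]

lemma linEnergy_split {T : ℝ} {W : ℝ → ℝ} (hT : 0 < T)
    (hW : ContinuousOn W (Set.Icc (-(T / 2)) (T / 2)))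
    {ψ : ℝ → ℂ} (hψ : ContDiff ℝ 1 ψ) :
    linEnergy W T ψ = QR W T (fun z => (ψ z).re) + QR W T (fun z => (ψ z).im) := by
  have hψ' := hψ.continuous_deriv le_rfl
  have hre' : Continuous fun z => (deriv ψ z).re := Complex.continuous_re.comp hψ'
  have him' : Continuous fun z => (deriv ψ z).im := Complex.continuous_im.comp hψ'
  have hre : Continuous fun z => (ψ z).re := Complex.continuous_re.comp hψ.continuous
  have him : Continuous fun z => (ψ z).im := Complex.continuous_im.comp hψ.continuous
  unfold linEnergy QR
  have e1 : (∫ z in (-(T / 2))..(T / 2), ‖deriv ψ z‖ ^ 2)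
      = ∫ z in (-(T / 2))..(T / 2), ((deriv ψ z).re ^ 2 + (deriv ψ z).im ^ 2) := by
    apply integral_congr
    intro z _
    exact norm_sq_eq _
  have e2 : (∫ z in (-(T / 2))..(T / 2), W z * ‖ψ z‖ ^ 2)
      = ∫ z in (-(T / 2))..(T / 2), (W z * (ψ z).re ^ 2 + W z * (ψ z).im ^ 2) := by
    apply integral_congr
    intro z _
    dsimp only
    rw [norm_sq_eq]
    ring
  have e3 : (∫ z in (-(T / 2))..(T / 2), (deriv (fun z => (ψ z).re) z) ^ 2)
      = ∫ z in (-(T / 2))..(T / 2), (deriv ψ z).re ^ 2 := by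
    apply integral_congr; intro z _; simp only [deriv_re hψ]
  have e4 : (∫ z in (-(T / 2))..(T / 2), (deriv (fun z => (ψ z).im) z) ^ 2)
      = ∫ z in (-(T / 2))..(T / 2), (deriv ψ z).im ^ 2 := by
    apply integral_congr; intro z _; simp only [deriv_im hψ]
  erw [e1, e2, e3, e4,
    intervalIntegral.integral_add ((hre'.pow 2).intervalIntegrable _ _)
      ((him'.pow 2).intervalIntegrable _ _),
    intervalIntegral.integral_add (iiW hT hW (hre.pow 2)) (iiW hT hW (him.pow 2))]
  simp only [Pi.mul_apply, Pi.pow_apply]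
  ring

set_option maxHeartbeats 2000000 in
theorem gp_refined_lower_bound
    (T : ℝ) (hT : 0 < T) (W : ℝ → ℝ) (hWcont : ContinuousOn W (Set.Icc (-(T / 2)) (T / 2)))
    (hWpos : ∀ z, 0 ≤ W z)
    (g : ℝ) (hg : 0 ≤ g)
    (lam1 lam2 : ℝ) (hgap : lam1 < lam2) (phi1 : ℝ → ℝ)
    (hmem : (fun z => (phi1 z : ℂ)) ∈ admissible T)
    (hground : linEnergy W T (fun z => (phi1 z : ℂ)) = lam1)
    (hmin : ∀ ψ ∈ admissible T, lam1 ≤ linEnergy W T ψ)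
    (hsecond : ∀ ψ : ℝ → ℂ, ContDiff ℝ 1 ψ → Function.Periodic ψ T →
      (∫ z in (-(T / 2))..(T / 2), (phi1 z : ℂ) * ψ z) = 0 →
      lam2 * (∫ z in (-(T / 2))..(T / 2), ‖ψ z‖ ^ 2) ≤ linEnergy W T ψ) :
    sInf (gpEnergy W T g '' admissible T) ≥
      lam1 + g * pNorm T 4 phi1 ^ 4 -
        (2 : ℝ) ^ ((5 : ℝ) / 2) * g ^ ((3 : ℝ) / 2) * pNorm T 6 phi1 ^ 3 *
          pNorm T 4 phi1 ^ 2 * (lam2 - lam1) ^ (-(1 : ℝ) / 2) := by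
  have hab : -(T / 2) ≤ T / 2 := by linarith
  have hmem' := hmem
  obtain ⟨hphiCC, hphiperC, hphinormC⟩ := hmem'
  have hphiC : ContDiff ℝ 1 phi1 := by
    have h := Complex.reCLM.contDiff.comp hphiCC
    simpa [Function.comp_def] using h
  have hphic := hphiC.continuous
  have hphiper : Function.Periodic phi1 T := fun z => by
    have h := congrArg Complex.re (hphiperC z)
    simpa using h
  set m4 : ℝ := ∫ z in (-(T / 2))..(T / 2), (phi1 z) ^ 4 with hm4def
  set m6 : ℝ := ∫ z in (-(T / 2))..(T / 2), (phi1 z) ^ 6 with hm6def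
  have hm40 : 0 ≤ m4 := integral_nonneg hab (fun z _ => by positivity)
  have hm60 : 0 ≤ m6 := integral_nonneg hab (fun z _ => by positivity)
  have hnorm1 : (∫ z in (-(T / 2))..(T / 2), (phi1 z) ^ 2) = 1 := by
    rw [← hphinormC]
    apply integral_congr
    intro z _
    simp only [Complex.norm_real, Real.norm_eq_abs, sq_abs]
  -- rewrite the powers/rpow in the goal
  have e4 : (∫ z in (-(T / 2))..(T / 2), |phi1 z| ^ (4:ℝ)) = m4 := by
    apply integral_congr
    intro z _
    dsimp only
    rw [show ((4:ℝ)) = ((4:ℕ):ℝ) by norm_num, Real.rpow_natCast, ← abs_pow]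
    exact abs_of_nonneg (by positivity)
  have e6 : (∫ z in (-(T / 2))..(T / 2), |phi1 z| ^ (6:ℝ)) = m6 := by
    apply integral_congr
    intro z _
    dsimp only
    rw [show ((6:ℝ)) = ((6:ℕ):ℝ) by norm_num, Real.rpow_natCast, ← abs_pow]
    exact abs_of_nonneg (by positivity)
  have hp4 : pNorm T 4 phi1 ^ 4 = m4 := by
    unfold pNorm
    rw [e4, ← Real.rpow_natCast (m4 ^ ((1:ℝ)/4)) 4, ← Real.rpow_mul hm40]
    norm_num
  have hp42 : pNorm T 4 phi1 ^ 2 = Real.sqrt m4 := by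
    unfold pNorm
    rw [e4, ← Real.rpow_natCast (m4 ^ ((1:ℝ)/4)) 2, ← Real.rpow_mul hm40, Real.sqrt_eq_rpow]
    norm_num
  have hp63 : pNorm T 6 phi1 ^ 3 = Real.sqrt m6 := by
    unfold pNorm
    rw [e6, ← Real.rpow_natCast (m6 ^ ((1:ℝ)/6)) 3, ← Real.rpow_mul hm60, Real.sqrt_eq_rpow]
    norm_num
  have hgg : g ^ ((3:ℝ)/2) = g * Real.sqrt g := by
    rcases eq_or_lt_of_le hg with h0 | hpos
    · rw [← h0]
      simp [Real.zero_rpow (by norm_num : ((3:ℝ)/2) ≠ 0)]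
    · rw [show (3:ℝ)/2 = 1 + 1/2 by norm_num, Real.rpow_add hpos, Real.rpow_one,
        ← Real.sqrt_eq_rpow]
  have hdel : (lam2 - lam1) ^ (-(1:ℝ)/2) = (Real.sqrt (lam2 - lam1))⁻¹ := by
    rw [show -(1:ℝ)/2 = -(1/2) by norm_num, Real.rpow_neg (by linarith), ← Real.sqrt_eq_rpow]
  rw [ge_iff_le, hp4, hp42, hp63, hgg, hdel]
  -- basic spectral facts
  have hQRphi : QR W T phi1 = lam1 := by rw [← linEnergy_ofReal hphiC]; exact hground
  have lemA : ∀ x : ℝ → ℝ, ContDiff ℝ 1 x → Function.Periodic x T →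
      lam1 * (∫ z in (-(T / 2))..(T / 2), (x z) ^ 2) ≤ QR W T x := by
    intro x hx hxp
    set N : ℝ := ∫ z in (-(T / 2))..(T / 2), (x z) ^ 2 with hNdef
    have hN0 : 0 ≤ N := integral_nonneg hab (fun z _ => sq_nonneg _)
    rcases eq_or_lt_of_le hN0 with h0 | hpos
    · rw [← h0, mul_zero]
      exact QR_nonneg hT hWpos x
    · have hc2 : ((Real.sqrt N)⁻¹) ^ 2 * N = 1 := by
        rw [inv_pow, Real.sq_sqrt hN0]
        exact inv_mul_cancel₀ (ne_of_gt hpos)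
      have hadm : (fun z => (((Real.sqrt N)⁻¹ * x z : ℝ) : ℂ)) ∈ admissible T := by
        refine ⟨Complex.ofRealCLM.contDiff.comp (contDiff_const.mul hx), ?_, ?_⟩
        · intro z
          simp only
          rw [hxp z]
        · rw [integral_congr (g := fun z => ((Real.sqrt N)⁻¹) ^ 2 * (x z) ^ 2)
            (fun z _ => by simp only [Complex.norm_real, Real.norm_eq_abs, sq_abs]; ring),
            intervalIntegral.integral_const_mul]
          exact hc2
      have hle := hmin _ hadm
      rw [linEnergy_ofReal (contDiff_const.mul hx), QR_smul hx] at hle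
      calc lam1 * N ≤ (((Real.sqrt N)⁻¹) ^ 2 * QR W T x) * N :=
            mul_le_mul_of_nonneg_right hle hN0
        _ = QR W T x * (((Real.sqrt N)⁻¹) ^ 2 * N) := by ring
        _ = QR W T x := by rw [hc2, mul_one]
  have hlam1 : 0 ≤ lam1 := by
    rw [← hQRphi]
    exact QR_nonneg hT hWpos phi1
  have lemB : ∀ u : ℝ → ℝ, ContDiff ℝ 1 u → Function.Periodic u T →
      (∫ z in (-(T / 2))..(T / 2), phi1 z * u z) = 0 → BR W T phi1 u = 0 := by
    intro u hu hup horth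
    have huc := hu.continuous
    have key : ∀ t : ℝ, 0 ≤ (QR W T u - lam1 * ∫ z in (-(T / 2))..(T / 2), (u z) ^ 2) * t ^ 2
        + (2 * BR W T phi1 u) * t := by
      intro t
      have hA := lemA (fun z => 1 * phi1 z + t * u z)
        ((contDiff_const.mul hphiC).add (contDiff_const.mul hu))
        (fun z => by simp only; rw [hphiper z, hup z])
      rw [QR_expand hT hWcont hphiC hu 1 t] at hA
      rw [sq_int_expand hphic huc 1 t] at hA
      rw [hQRphi, hnorm1, horth] at hA
      linarith [hA]
    have := quad_lin_zero key
    linarith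
  -- reduce to a lower bound over admissible ψ
  apply le_csInf ⟨gpEnergy W T g (fun z => (phi1 z : ℂ)),
    Set.mem_image_of_mem _ hmem⟩
  rintro x ⟨ψ, ⟨hψC, hψper, hψnorm⟩, rfl⟩
  have hfC : ContDiff ℝ 1 fun z => (ψ z).re := Complex.reCLM.contDiff.comp hψC
  have hhC : ContDiff ℝ 1 fun z => (ψ z).im := Complex.imCLM.contDiff.comp hψC
  have hfc := hfC.continuous
  have hhc := hhC.continuous
  have hfper : Function.Periodic (fun z => (ψ z).re) T := fun z =>
    congrArg Complex.re (hψper z)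
  have hhper : Function.Periodic (fun z => (ψ z).im) T := fun z =>
    congrArg Complex.im (hψper z)
  obtain ⟨a0, ha0⟩ : ∃ r : ℝ, r = ∫ z in (-(T / 2))..(T / 2), phi1 z * (ψ z).re := ⟨_, rfl⟩
  obtain ⟨b0, hb0⟩ : ∃ r : ℝ, r = ∫ z in (-(T / 2))..(T / 2), phi1 z * (ψ z).im := ⟨_, rfl⟩
  obtain ⟨u, hu⟩ : ∃ u : ℝ → ℝ, u = fun z => (ψ z).re - a0 * phi1 z := ⟨_, rfl⟩
  obtain ⟨v, hv⟩ : ∃ v : ℝ → ℝ, v = fun z => (ψ z).im - b0 * phi1 z := ⟨_, rfl⟩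
  have huC : ContDiff ℝ 1 u := by rw [hu]; exact hfC.sub (contDiff_const.mul hphiC)
  have hvC : ContDiff ℝ 1 v := by rw [hv]; exact hhC.sub (contDiff_const.mul hphiC)
  have huc := huC.continuous
  have hvc := hvC.continuous
  have huper : Function.Periodic u T := fun z => by
    rw [hu]; simp only; rw [congrArg Complex.re (hψper z), hphiper z]
  have hvper : Function.Periodic v T := fun z => by
    rw [hv]; simp only; rw [congrArg Complex.im (hψper z), hphiper z]
  have horthu : (∫ z in (-(T / 2))..(T / 2), phi1 z * u z) = 0 := by
    have e : ∀ z, phi1 z * u z = phi1 z * (ψ z).re - a0 * (phi1 z) ^ 2 := fun z => by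
      rw [hu]; ring
    erw [integral_congr (g := fun z => phi1 z * (ψ z).re - a0 * (phi1 z) ^ 2) (fun z _ => e z),
      intervalIntegral.integral_sub ((hphic.mul hfc).intervalIntegrable _ _)
        ((continuous_const.mul (hphic.pow 2)).intervalIntegrable _ _),
      intervalIntegral.integral_const_mul, hnorm1, ← ha0]
    ring
  have horthv : (∫ z in (-(T / 2))..(T / 2), phi1 z * v z) = 0 := by
    have e : ∀ z, phi1 z * v z = phi1 z * (ψ z).im - b0 * (phi1 z) ^ 2 := fun z => by
      rw [hv]; ring
    erw [integral_congr (g := fun z => phi1 z * (ψ z).im - b0 * (phi1 z) ^ 2) (fun z _ => e z),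
      intervalIntegral.integral_sub ((hphic.mul hhc).intervalIntegrable _ _)
        ((continuous_const.mul (hphic.pow 2)).intervalIntegrable _ _),
      intervalIntegral.integral_const_mul, hnorm1, ← hb0]
    ring
  obtain ⟨Iu, hIu⟩ : ∃ r : ℝ, r = ∫ z in (-(T / 2))..(T / 2), (u z) ^ 2 := ⟨_, rfl⟩
  obtain ⟨Iv, hIv⟩ : ∃ r : ℝ, r = ∫ z in (-(T / 2))..(T / 2), (v z) ^ 2 := ⟨_, rfl⟩
  have hIu0 : 0 ≤ Iu := hIu ▸ integral_nonneg hab (fun z _ => sq_nonneg _)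
  have hIv0 : 0 ≤ Iv := hIv ▸ integral_nonneg hab (fun z _ => sq_nonneg _)
  -- decomposition of the L² norm
  have hfdec : (∫ z in (-(T / 2))..(T / 2), ((ψ z).re) ^ 2) = a0 ^ 2 + Iu := by
    have e : ∀ z, ((ψ z).re) ^ 2 = (a0 * phi1 z + 1 * u z) ^ 2 := fun z => by rw [hu]; ring
    rw [integral_congr (g := fun z => (a0 * phi1 z + 1 * u z) ^ 2) (fun z _ => e z),
      sq_int_expand hphic huc a0 1, hnorm1, horthu, ← hIu]
    ring
  have hhdec : (∫ z in (-(T / 2))..(T / 2), ((ψ z).im) ^ 2) = b0 ^ 2 + Iv := by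
    have e : ∀ z, ((ψ z).im) ^ 2 = (b0 * phi1 z + 1 * v z) ^ 2 := fun z => by rw [hv]; ring
    rw [integral_congr (g := fun z => (b0 * phi1 z + 1 * v z) ^ 2) (fun z _ => e z),
      sq_int_expand hphic hvc b0 1, hnorm1, horthv, ← hIv]
    ring
  have hsum : (a0 ^ 2 + Iu) + (b0 ^ 2 + Iv) = 1 := by
    erw [← hfdec, ← hhdec, ← intervalIntegral.integral_add ((hfc.pow 2).intervalIntegrable _ _)
      ((hhc.pow 2).intervalIntegrable _ _), ← hψnorm]
    apply integral_congr
    intro z _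
    exact (norm_sq_eq _).symm
  -- energy decomposition
  have hBRu : BR W T phi1 u = 0 := lemB u huC huper horthu
  have hBRv : BR W T phi1 v = 0 := lemB v hvC hvper horthv
  have hQRf : QR W T (fun z => (ψ z).re) = lam1 * a0 ^ 2 + QR W T u := by
    have e : (fun z => (ψ z).re) = fun z => a0 * phi1 z + 1 * u z := funext fun z => by
      rw [hu]; simp only; ring
    rw [e, QR_expand hT hWcont hphiC huC a0 1, hQRphi, hBRu]
    ring
  have hQRh : QR W T (fun z => (ψ z).im) = lam1 * b0 ^ 2 + QR W T v := by
    have e : (fun z => (ψ z).im) = fun z => b0 * phi1 z + 1 * v z := funext fun z => by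
      rw [hv]; simp only; ring
    rw [e, QR_expand hT hWcont hphiC hvC b0 1, hQRphi, hBRv]
    ring
  -- spectral gap for the orthogonal part
  have hwC : ContDiff ℝ 1 (fun z => ((u z : ℂ) + (v z : ℂ) * Complex.I)) :=
    (Complex.ofRealCLM.contDiff.comp huC).add
      ((Complex.ofRealCLM.contDiff.comp hvC).mul contDiff_const)
  have hwper : Function.Periodic (fun z => ((u z : ℂ) + (v z : ℂ) * Complex.I)) T := fun z => by
    simp only; rw [huper z, hvper z]
  have hworth : (∫ z in (-(T / 2))..(T / 2),
      (phi1 z : ℂ) * ((u z : ℂ) + (v z : ℂ) * Complex.I)) = 0 := by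
    have e : ∀ z, (phi1 z : ℂ) * ((u z : ℂ) + (v z : ℂ) * Complex.I)
        = ((phi1 z * u z : ℝ) : ℂ) + ((phi1 z * v z : ℝ) : ℂ) * Complex.I := fun z => by
      push_cast; ring
    erw [integral_congr (fun z _ => e z),
      intervalIntegral.integral_add
        ((show Continuous fun z => ((phi1 z * u z : ℝ) : ℂ) from
          Complex.continuous_ofReal.comp (hphic.mul huc)).intervalIntegrable _ _)
        (((show Continuous fun z => ((phi1 z * v z : ℝ) : ℂ) from
          Complex.continuous_ofReal.comp (hphic.mul hvc)).mul
          continuous_const).intervalIntegrable _ _),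
      intervalIntegral.integral_mul_const, intervalIntegral.integral_ofReal,
      intervalIntegral.integral_ofReal, horthu, horthv]
    simp
  have hsec := hsecond _ hwC hwper hworth
  have hwnorm : (∫ z in (-(T / 2))..(T / 2), ‖(u z : ℂ) + (v z : ℂ) * Complex.I‖ ^ 2)
      = Iu + Iv := by
    erw [integral_congr (g := fun z => (u z) ^ 2 + (v z) ^ 2) (fun z _ => by
        dsimp only; rw [norm_sq_eq]; simp),
      intervalIntegral.integral_add ((huc.pow 2).intervalIntegrable _ _)
        ((hvc.pow 2).intervalIntegrable _ _), ← hIu, ← hIv]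
  have hwlin : linEnergy W T (fun z => (u z : ℂ) + (v z : ℂ) * Complex.I)
      = QR W T u + QR W T v := by
    rw [linEnergy_split hT hWcont hwC]
    congr 1
    · exact congrArg (QR W T) (funext fun z => by simp)
    · exact congrArg (QR W T) (funext fun z => by simp)
  rw [hwnorm, hwlin] at hsec
  -- lower bound on the linear energy
  have hlinlb : lam1 * (a0 ^ 2 + b0 ^ 2) + lam2 * (Iu + Iv) ≤ linEnergy W T ψ := by
    rw [linEnergy_split hT hWcont hψC, hQRf, hQRh]
    linarith [hsec]
  -- quartic term lower bound
  obtain ⟨R, hR⟩ : ∃ r : ℝ, r = a0 ^ 2 + b0 ^ 2 := ⟨_, rfl⟩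
  have hR0 : 0 ≤ R := hR ▸ by positivity
  have hSR0 : 0 ≤ Real.sqrt R := Real.sqrt_nonneg _
  have hquartpt : ∀ z : ℝ,
      R ^ 2 * (phi1 z) ^ 4 - 4 * (R * Real.sqrt R) *
        (|phi1 z| ^ 3 * Real.sqrt ((u z) ^ 2 + (v z) ^ 2)) ≤ ‖ψ z‖ ^ 4 := by
    intro z
    have hre : (ψ z).re = a0 * phi1 z + u z := by rw [hu]; ring
    have him : (ψ z).im = b0 * phi1 z + v z := by rw [hv]; ring
    have h4 : ‖ψ z‖ ^ 4 = (((ψ z).re) ^ 2 + ((ψ z).im) ^ 2) ^ 2 := by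
      rw [show (4 : ℕ) = 2 * 2 from rfl, pow_mul, norm_sq_eq]
    rw [h4, hre, him]
    have hr0 : 0 ≤ Real.sqrt ((u z) ^ 2 + (v z) ^ 2) := Real.sqrt_nonneg _
    have hr2 : (Real.sqrt ((u z) ^ 2 + (v z) ^ 2)) ^ 2 = (u z) ^ 2 + (v z) ^ 2 :=
      Real.sq_sqrt (by positivity)
    have hsR : Real.sqrt R * Real.sqrt R = R := Real.mul_self_sqrt hR0
    have hcs2 : (a0 * u z + b0 * v z) ^ 2 ≤ R * ((u z) ^ 2 + (v z) ^ 2) := by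
      rw [hR]; linarith [sq_nonneg (a0 * v z - b0 * u z)]
    have habs : |a0 * u z + b0 * v z| ≤ Real.sqrt R * Real.sqrt ((u z) ^ 2 + (v z) ^ 2) := by
      have h1 : Real.sqrt ((a0 * u z + b0 * v z) ^ 2)
          ≤ Real.sqrt (R * ((u z) ^ 2 + (v z) ^ 2)) := Real.sqrt_le_sqrt hcs2
      rwa [Real.sqrt_sq_eq_abs, Real.sqrt_mul hR0] at h1
    have hkey : -(Real.sqrt R * Real.sqrt ((u z) ^ 2 + (v z) ^ 2)) * (2 * |phi1 z|)
        ≤ 2 * phi1 z * (a0 * u z + b0 * v z) := by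
      have h1 : -(|phi1 z| * |a0 * u z + b0 * v z|) ≤ phi1 z * (a0 * u z + b0 * v z) := by
        rw [← abs_mul]; exact neg_abs_le _
      linarith [h1, mul_le_mul_of_nonneg_left habs (abs_nonneg (phi1 z))]
    have hkey2 : -(Real.sqrt R * Real.sqrt ((u z) ^ 2 + (v z) ^ 2)) * (2 * |phi1 z|)
        ≤ 2 * phi1 z * (a0 * u z + b0 * v z) + ((u z) ^ 2 + (v z) ^ 2) := by
      linarith [hkey, sq_nonneg (u z), sq_nonneg (v z)]
    have habs3 : |phi1 z| ^ 3 = (phi1 z) ^ 2 * |phi1 z| := by rw [pow_succ, sq_abs]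
    have h2Rp : (0:ℝ) ≤ 2 * (R * (phi1 z) ^ 2) :=
      mul_nonneg (by norm_num) (mul_nonneg hR0 (sq_nonneg _))
    calc R ^ 2 * (phi1 z) ^ 4 - 4 * (R * Real.sqrt R) *
          (|phi1 z| ^ 3 * Real.sqrt ((u z) ^ 2 + (v z) ^ 2))
        = (R * (phi1 z) ^ 2) ^ 2 + 2 * (R * (phi1 z) ^ 2) *
            (-(Real.sqrt R * Real.sqrt ((u z) ^ 2 + (v z) ^ 2)) * (2 * |phi1 z|)) := by
          rw [habs3]; ring
      _ ≤ (R * (phi1 z) ^ 2) ^ 2 + 2 * (R * (phi1 z) ^ 2) *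
            (2 * phi1 z * (a0 * u z + b0 * v z) + ((u z) ^ 2 + (v z) ^ 2)) := by
          linarith [mul_le_mul_of_nonneg_left hkey2 h2Rp]
      _ ≤ (R * (phi1 z) ^ 2 +
            (2 * phi1 z * (a0 * u z + b0 * v z) + ((u z) ^ 2 + (v z) ^ 2))) ^ 2 := by
          linarith [sq_nonneg (2 * phi1 z * (a0 * u z + b0 * v z) + ((u z) ^ 2 + (v z) ^ 2))]
      _ = ((a0 * phi1 z + u z) ^ 2 + (b0 * phi1 z + v z) ^ 2) ^ 2 := by rw [hR]; ring
  have hrc : Continuous fun z => Real.sqrt ((u z) ^ 2 + (v z) ^ 2) :=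
    Real.continuous_sqrt.comp ((huc.pow 2).add (hvc.pow 2))
  have hquartint : R ^ 2 * m4 - 4 * (R * Real.sqrt R) *
      (∫ z in (-(T / 2))..(T / 2), |phi1 z| ^ 3 * Real.sqrt ((u z) ^ 2 + (v z) ^ 2))
      ≤ ∫ z in (-(T / 2))..(T / 2), ‖ψ z‖ ^ 4 := by
    have hcont : Continuous fun z => |phi1 z| ^ 3 * Real.sqrt ((u z) ^ 2 + (v z) ^ 2) :=
      (hphic.abs.pow 3).mul hrc
    have hmono := integral_mono_on (μ := volume)
      (f := fun z => R ^ 2 * (phi1 z) ^ 4 - 4 * (R * Real.sqrt R) *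
        (|phi1 z| ^ 3 * Real.sqrt ((u z) ^ 2 + (v z) ^ 2)))
      (g := fun z => ‖ψ z‖ ^ 4) hab
      (((continuous_const.mul (hphic.pow 4)).sub
        (continuous_const.mul hcont)).intervalIntegrable _ _)
      ((hψC.continuous.norm.pow 4).intervalIntegrable _ _)
      (fun z _ => hquartpt z)
    erw [intervalIntegral.integral_sub
        ((continuous_const.mul (hphic.pow 4)).intervalIntegrable _ _)
        ((continuous_const.mul hcont).intervalIntegrable _ _),
      intervalIntegral.integral_const_mul, intervalIntegral.integral_const_mul,
      ← hm4def] at hmono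
    exact hmono
  have e63 : (∫ z in (-(T / 2))..(T / 2), (|phi1 z| ^ 3) ^ 2) = m6 := by
    apply integral_congr
    intro z _
    dsimp only
    rw [show (|phi1 z| ^ 3) ^ 2 = |phi1 z| ^ 6 by ring, ← abs_pow]
    exact abs_of_nonneg (by positivity)
  have hcsr : (∫ z in (-(T / 2))..(T / 2), |phi1 z| ^ 3 * Real.sqrt ((u z) ^ 2 + (v z) ^ 2))
      ≤ Real.sqrt m6 * Real.sqrt (Iu + Iv) := by
    have h := integral_cs hab (f := fun z => |phi1 z| ^ 3)
      (g := fun z => Real.sqrt ((u z) ^ 2 + (v z) ^ 2))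
      (((hphic.abs.pow 3).pow 2).intervalIntegrable _ _)
      ((hrc.pow 2).intervalIntegrable _ _)
      (((hphic.abs.pow 3).mul hrc).intervalIntegrable _ _)
    have er2 : (∫ z in (-(T / 2))..(T / 2), (Real.sqrt ((u z) ^ 2 + (v z) ^ 2)) ^ 2)
        = Iu + Iv := by
      erw [integral_congr (g := fun z => (u z) ^ 2 + (v z) ^ 2)
          (fun z _ => by dsimp only; exact Real.sq_sqrt (by positivity)),
        intervalIntegral.integral_add ((huc.pow 2).intervalIntegrable _ _)
          ((hvc.pow 2).intervalIntegrable _ _), ← hIu, ← hIv]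
    rwa [e63, er2] at h
  have hquart : R ^ 2 * m4 - 4 * (R * Real.sqrt R) * (Real.sqrt m6 * Real.sqrt (Iu + Iv))
      ≤ ∫ z in (-(T / 2))..(T / 2), ‖ψ z‖ ^ 4 := by
    have hco : (0:ℝ) ≤ 4 * (R * Real.sqrt R) :=
      mul_nonneg (by norm_num) (mul_nonneg hR0 hSR0)
    linarith [mul_le_mul_of_nonneg_left hcsr hco, hquartint]
  -- Cauchy-Schwarz: m4 ≤ √m6
  have hm4m6 : m4 ≤ Real.sqrt m6 := by
    have h := integral_cs hab (f := fun z => |phi1 z| ^ 3) (g := fun z => |phi1 z|)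
      (((hphic.abs.pow 3).pow 2).intervalIntegrable _ _)
      ((hphic.abs.pow 2).intervalIntegrable _ _)
      (((hphic.abs.pow 3).mul hphic.abs).intervalIntegrable _ _)
    have e1 : (∫ z in (-(T / 2))..(T / 2), |phi1 z| ^ 3 * |phi1 z|) = m4 := by
      apply integral_congr
      intro z _
      dsimp only
      rw [show |phi1 z| ^ 3 * |phi1 z| = |phi1 z| ^ 4 by ring, ← abs_pow]
      exact abs_of_nonneg (by positivity)
    have e2 : (∫ z in (-(T / 2))..(T / 2), (|phi1 z|) ^ 2) = 1 := by
      rw [← hnorm1]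
      exact integral_congr (fun z _ => sq_abs _)
    rw [e63, e1, e2, Real.sqrt_one, mul_one] at h
    exact h
  -- final arithmetic
  have hsm60 : 0 ≤ Real.sqrt m6 := Real.sqrt_nonneg _
  have hC0 : 0 ≤ (2:ℝ) ^ ((5:ℝ)/2) * (g * Real.sqrt g) * Real.sqrt m6 * Real.sqrt m4 *
      (Real.sqrt (lam2 - lam1))⁻¹ :=
    mul_nonneg (mul_nonneg (mul_nonneg (mul_nonneg
      (le_of_lt (Real.rpow_pos_of_pos two_pos _)) (mul_nonneg hg (Real.sqrt_nonneg g)))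
      hsm60) (Real.sqrt_nonneg m4)) (inv_nonneg.2 (Real.sqrt_nonneg _))
  by_cases hcase : lam1 + g * m4 ≤ gpEnergy W T g ψ
  · linarith [hC0]
  · push_neg at hcase
    have hI40 : 0 ≤ ∫ z in (-(T / 2))..(T / 2), ‖ψ z‖ ^ 4 :=
      integral_nonneg hab (fun z _ => by positivity)
    have hlinle : linEnergy W T ψ ≤ gpEnergy W T g ψ := by
      unfold gpEnergy
      linarith [mul_nonneg hg hI40]
    have hIuv0 : 0 ≤ Iu + Iv := by linarith
    obtain ⟨ε, hε⟩ : ∃ e : ℝ, e = Real.sqrt (Iu + Iv) := ⟨_, rfl⟩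
    have hε0 : 0 ≤ ε := hε ▸ Real.sqrt_nonneg _
    have hε2 : ε ^ 2 = Iu + Iv := hε ▸ Real.sq_sqrt hIuv0
    have hRe : R = 1 - ε ^ 2 := by rw [hε2, hR]; linarith [hsum]
    have hΔpos : 0 < lam2 - lam1 := by linarith
    have hEb : (lam2 - lam1) * (Iu + Iv) ≤ g * m4 := by
      have h1 : lam1 * (a0 ^ 2 + b0 ^ 2) = lam1 * 1 - lam1 * (Iu + Iv) := by
        rw [show (a0:ℝ) ^ 2 + b0 ^ 2 = 1 - (Iu + Iv) by linarith [hsum]]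
        ring
      rw [h1] at hlinlb
      linarith [hlinlb, hlinle, hcase]
    have hεle : ε ≤ Real.sqrt g * Real.sqrt m4 * (Real.sqrt (lam2 - lam1))⁻¹ := by
      have h1 : Iu + Iv ≤ g * m4 / (lam2 - lam1) := (le_div_iff₀ hΔpos).2 (by linarith [hEb])
      have h2 := Real.sqrt_le_sqrt h1
      rwa [← hε, Real.sqrt_div (mul_nonneg hg hm40), Real.sqrt_mul hg, div_eq_mul_inv] at h2
    have hR1 : R ≤ 1 := by rw [hRe]; linarith [sq_nonneg ε]
    have hSR1 : Real.sqrt R ≤ 1 := Real.sqrt_le_one.mpr hR1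
    have hRR : R * Real.sqrt R ≤ 1 - ε ^ 2 := by
      rw [← hRe]
      exact mul_le_of_le_one_right hR0 hSR1
    have hε1 : ε ≤ 1 := hε ▸ Real.sqrt_le_one.mpr (by linarith)
    have hc2b : (17:ℝ)/4 ≤ (2:ℝ) ^ ((5:ℝ)/2) := by
      have h32 : (2:ℝ) ^ ((5:ℝ)/2) = Real.sqrt 32 := by
        rw [show ((5:ℝ)/2) = (5:ℝ) * (1/2) by norm_num, Real.rpow_mul (by norm_num),
          show ((5:ℝ)) = ((5:ℕ):ℝ) by norm_num, Real.rpow_natCast, Real.sqrt_eq_rpow]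
        norm_num
      rw [h32, show (17:ℝ)/4 = Real.sqrt ((17/4)^2) from (Real.sqrt_sq (by norm_num)).symm]
      apply Real.sqrt_le_sqrt
      norm_num
    -- the error-term chain
    have t1 : g * m4 * (1 - R ^ 2) ≤ 2 * (g * m4) * ε ^ 2 := by
      rw [hRe]
      linarith [mul_nonneg (mul_nonneg hg hm40) (pow_nonneg hε0 4)]
    have t2 : 4 * g * (R * Real.sqrt R) * (Real.sqrt m6 * ε)
        ≤ 4 * g * ((1 - ε ^ 2) * (Real.sqrt m6 * ε)) := by
      have hco : (0:ℝ) ≤ 4 * g * (Real.sqrt m6 * ε) :=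
        mul_nonneg (mul_nonneg (by norm_num) hg) (mul_nonneg hsm60 hε0)
      calc 4 * g * (R * Real.sqrt R) * (Real.sqrt m6 * ε)
          = (R * Real.sqrt R) * (4 * g * (Real.sqrt m6 * ε)) := by ring
        _ ≤ (1 - ε ^ 2) * (4 * g * (Real.sqrt m6 * ε)) :=
            mul_le_mul_of_nonneg_right hRR hco
        _ = 4 * g * ((1 - ε ^ 2) * (Real.sqrt m6 * ε)) := by ring
    have t3 : 2 * (g * m4) * ε ^ 2 ≤ 2 * (g * Real.sqrt m6) * ε ^ 2 := by
      linarith [mul_le_mul_of_nonneg_left hm4m6 (mul_nonneg hg (sq_nonneg ε))]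
    have t4 : 2 * (g * Real.sqrt m6) * ε ^ 2 + 4 * g * ((1 - ε ^ 2) * (Real.sqrt m6 * ε))
        ≤ (17/4) * (g * (Real.sqrt m6 * ε)) := by
      linarith [mul_nonneg (mul_nonneg (mul_nonneg hg hsm60) hε0) (sq_nonneg (2 * ε - 1/2))]
    have t5 : (17/4) * (g * (Real.sqrt m6 * ε)) ≤ (17/4) * (g * (Real.sqrt m6 *
        (Real.sqrt g * Real.sqrt m4 * (Real.sqrt (lam2 - lam1))⁻¹))) := by
      have hco : (0:ℝ) ≤ (17/4) * (g * Real.sqrt m6) :=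
        mul_nonneg (by norm_num) (mul_nonneg hg hsm60)
      calc (17/4) * (g * (Real.sqrt m6 * ε)) = ((17/4) * (g * Real.sqrt m6)) * ε := by ring
        _ ≤ ((17/4) * (g * Real.sqrt m6)) *
            (Real.sqrt g * Real.sqrt m4 * (Real.sqrt (lam2 - lam1))⁻¹) :=
            mul_le_mul_of_nonneg_left hεle hco
        _ = (17/4) * (g * (Real.sqrt m6 *
            (Real.sqrt g * Real.sqrt m4 * (Real.sqrt (lam2 - lam1))⁻¹))) := by ring
    have t6 : (17/4) * (g * (Real.sqrt m6 *
        (Real.sqrt g * Real.sqrt m4 * (Real.sqrt (lam2 - lam1))⁻¹)))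
        ≤ (2:ℝ) ^ ((5:ℝ)/2) * (g * Real.sqrt g) * Real.sqrt m6 * Real.sqrt m4 *
          (Real.sqrt (lam2 - lam1))⁻¹ := by
      have hfac : (0:ℝ) ≤ g * (Real.sqrt m6 *
          (Real.sqrt g * Real.sqrt m4 * (Real.sqrt (lam2 - lam1))⁻¹)) :=
        mul_nonneg hg (mul_nonneg hsm60 (mul_nonneg
          (mul_nonneg (Real.sqrt_nonneg g) (Real.sqrt_nonneg m4))
          (inv_nonneg.2 (Real.sqrt_nonneg _))))
      calc (17/4) * (g * (Real.sqrt m6 *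
          (Real.sqrt g * Real.sqrt m4 * (Real.sqrt (lam2 - lam1))⁻¹)))
          ≤ (2:ℝ) ^ ((5:ℝ)/2) * (g * (Real.sqrt m6 *
            (Real.sqrt g * Real.sqrt m4 * (Real.sqrt (lam2 - lam1))⁻¹))) :=
            mul_le_mul_of_nonneg_right hc2b hfac
        _ = (2:ℝ) ^ ((5:ℝ)/2) * (g * Real.sqrt g) * Real.sqrt m6 * Real.sqrt m4 *
            (Real.sqrt (lam2 - lam1))⁻¹ := by ring
    have hchain : g * m4 * (1 - R ^ 2) + 4 * g * (R * Real.sqrt R) * (Real.sqrt m6 * ε)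
        ≤ (2:ℝ) ^ ((5:ℝ)/2) * (g * Real.sqrt g) * Real.sqrt m6 * Real.sqrt m4 *
          (Real.sqrt (lam2 - lam1))⁻¹ + (lam2 - lam1) * ε ^ 2 := by
      have hΔε : 0 ≤ (lam2 - lam1) * ε ^ 2 := mul_nonneg (le_of_lt hΔpos) (sq_nonneg ε)
      linarith [t1, t2, t3, t4, t5, t6]
    -- put everything together
    have hlin2 : lam1 + (lam2 - lam1) * ε ^ 2 ≤ linEnergy W T ψ := by
      have e : lam1 + (lam2 - lam1) * ε ^ 2 = lam1 * (a0 ^ 2 + b0 ^ 2) + lam2 * (Iu + Iv) := by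
        rw [hε2, show (a0:ℝ) ^ 2 + b0 ^ 2 = 1 - (Iu + Iv) by linarith [hsum]]
        ring
      rw [e]
      exact hlinlb
    have hgq := mul_le_mul_of_nonneg_left hquart hg
    rw [← hε] at hgq
    unfold gpEnergy
    linarith [hlin2, hgq, hchain]
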